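/- arXiv:math/0508243 — 3 statements merged into one kernel-verified Lean document; each statement's English description precedes it below -/
import Mathlib

section
/- Let A be a unital C*-algebra and let s, v ∈ A be isometries such that ‖s − v‖ < 2/(4√2 + 1). Then s and v are homotopic through isometries: there exists a norm-continuous path w : [0,1] → A with w(0) = s, w(1) = v, and w(t)*·w(t) = 1 for every t ∈ [0,1]. (In particular, s and v define the same class in the semigroup of homotopy classes of hyponormal partial isometries.) -/
/-!
Along the segment `x t = s + t • (v - s)` one has `‖star (x t) * x t - 1‖ ≤ 2δ + δ² < 1` where
`δ = ‖s - v‖ < √2 - 1`, so `star (x t) * x t` has spectrum in a fixed compact subset of `(0, ∞)`.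
The polar parts `x t * (star (x t) * x t)^(-1/2)` are then isometries, depend continuously on `t`
by continuity of the functional calculus, and agree with `s` and `v` at the endpoints.
Finally `2 / (4√2 + 1) ≤ √2 - 1`.
-/

open Set

lemma norm_eq_one_of_star_mul_self_eq_one {A : Type*} [NormedRing A] [StarRing A] [CStarRing A]
    [NormOneClass A] {s : A} (hs : star s * s = 1) : ‖s‖ = 1 := by
  have h : ‖s‖ * ‖s‖ = 1 := by rw [← CStarRing.norm_star_mul_self, hs, norm_one]
  nlinarith [norm_nonneg s]

lemma norm_star_mul_self_sub_one_le {A : Type*} [NormedRing A] [StarRing A] [CStarRing A]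
    [NormOneClass A] {s : A} (hs : star s * s = 1) (x : A) :
    ‖star x * x - 1‖ ≤ 2 * ‖x - s‖ + ‖x - s‖ ^ 2 := by
  set d := x - s
  have hx : x = s + d := by simp [d]
  have hexp : star x * x - 1 = star s * d + star d * s + star d * d := by
    rw [hx, star_add, add_mul, mul_add, mul_add, hs]; abel
  have hs1 := norm_eq_one_of_star_mul_self_eq_one hs
  calc ‖star x * x - 1‖ ≤ ‖star s * d‖ + ‖star d * s‖ + ‖star d * d‖ := by
        rw [hexp]; exact norm_add₃_le
    _ ≤ ‖star s‖ * ‖d‖ + ‖star d‖ * ‖s‖ + ‖star d‖ * ‖d‖ := by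
        gcongr <;> exact norm_mul_le _ _
    _ = 2 * ‖d‖ + ‖d‖ ^ 2 := by rw [norm_star, norm_star, hs1]; ring

lemma spectrum_subset_Icc_of_norm_sub_one_le {A : Type*} [NormedRing A] [NormedAlgebra ℝ A]
    [CompleteSpace A] [NormOneClass A] {a : A} {r : ℝ} (ha : ‖a - 1‖ ≤ r) :
    spectrum ℝ a ⊆ Icc (1 - r) (1 + r) := by
  intro k hk
  have hk' : k - 1 ∈ spectrum ℝ (a - 1) := by
    rw [← map_one (algebraMap ℝ A), ← spectrum.sub_singleton_eq]
    exact sub_mem_sub hk rfl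
  have := (spectrum.norm_le_norm_of_mem hk').trans ha
  rw [Real.norm_eq_abs, abs_le] at this
  constructor <;> linarith

lemma continuousOn_inv_sqrt {K : Set ℝ} (hK : K ⊆ Ioi 0) : ContinuousOn (fun r : ℝ => (√r)⁻¹) K :=
  Real.continuous_sqrt.continuousOn.inv₀ fun _ hr => (Real.sqrt_pos.2 (hK hr)).ne'

section polar

variable {A : Type*} [CStarAlgebra A]

noncomputable def polarIsometry (x : A) : A := x * cfc (fun r : ℝ => (√r)⁻¹) (star x * x)

lemma star_polarIsometry_mul_self {x : A} (hx : spectrum ℝ (star x * x) ⊆ Ioi 0) :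
    star (polarIsometry x) * polarIsometry x = 1 := by
  set a := star x * x
  have hg := continuousOn_inv_sqrt hx
  calc star (polarIsometry x) * polarIsometry x
      = cfc (fun r : ℝ => (√r)⁻¹) a * a * cfc (fun r : ℝ => (√r)⁻¹) a := by
        rw [polarIsometry, star_mul, IsSelfAdjoint.star_eq (cfc_predicate _ a)]
        simp only [a, mul_assoc]
    _ = cfc (fun r : ℝ => (√r)⁻¹ * r * (√r)⁻¹) a := by
        rw [cfc_mul (fun r : ℝ => (√r)⁻¹ * r) _ a (hg.mul continuousOn_id) hg,
          cfc_mul (fun r : ℝ => (√r)⁻¹) (fun r => r) a hg continuousOn_id,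
          cfc_id' ℝ a]
    _ = cfc (fun _ : ℝ => (1 : ℝ)) a := cfc_congr fun r hr => by
        have hr0 : 0 < r := hx hr
        field_simp
        rw [Real.sq_sqrt hr0.le]
    _ = 1 := cfc_const_one ℝ a

lemma polarIsometry_eq_self {x : A} (hx : star x * x = 1) : polarIsometry x = x := by
  simp [polarIsometry, hx]

lemma continuousOn_polarIsometry {K : Set ℝ} (hK : IsCompact K) (hK0 : K ⊆ Ioi 0) :
    ContinuousOn polarIsometry {x : A | spectrum ℝ (star x * x) ⊆ K} :=
  continuousOn_id.mul <| ContinuousOn.cfc' hK _ (continuous_star.mul continuous_id).continuousOn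
    (fun _ hx => hx) (fun x _ => IsSelfAdjoint.star_mul_self x) (continuousOn_inv_sqrt hK0)

end polar

theorem exists_path_isometry_of_norm_sub_lt {A : Type*} [CStarAlgebra A] {s v : A}
    (hs : star s * s = 1) (hv : star v * v = 1) (h : ‖s - v‖ < √2 - 1) :
    ∃ w : C(unitInterval, A), w 0 = s ∧ w 1 = v ∧ ∀ t, star (w t) * w t = 1 := by
  rcases subsingleton_or_nontrivial A with _ | _
  · exact ⟨.const _ s, Subsingleton.elim _ _, Subsingleton.elim _ _, fun _ => Subsingleton.elim _ _⟩
  set δ := ‖s - v‖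
  set r := 2 * δ + δ ^ 2
  have hr : r < 1 := by
    have h2 : √2 ^ 2 = 2 := Real.sq_sqrt zero_le_two
    nlinarith [norm_nonneg (s - v)]
  let x : C(unitInterval, A) := ⟨fun t => s + (t : ℝ) • (v - s), by fun_prop⟩
  have hxK : ∀ t, spectrum ℝ (star (x t) * x t) ⊆ Icc (1 - r) (1 + r) := by
    intro t
    refine spectrum_subset_Icc_of_norm_sub_one_le <|
      (norm_star_mul_self_sub_one_le hs _).trans ?_
    have hxt : ‖x t - s‖ ≤ δ := by
      simp only [x, ContinuousMap.coe_mk, add_sub_cancel_left, norm_smul, norm_sub_rev v s]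
      exact mul_le_of_le_one_left (norm_nonneg _) (by simpa [abs_of_nonneg t.2.1] using t.2.2)
    simp only [r]; gcongr
  have hK0 : Icc (1 - r) (1 + r) ⊆ Ioi 0 := fun k hk => by simp only [mem_Ioi]; linarith [hk.1]
  refine ⟨⟨fun t => polarIsometry (x t),
    (continuousOn_polarIsometry isCompact_Icc hK0).comp_continuous x.continuous hxK⟩, ?_, ?_,
    fun t => star_polarIsometry_mul_self ((hxK t).trans hK0)⟩
  · simp [x, polarIsometry_eq_self hs]
  · simp [x, polarIsometry_eq_self hv]

/-- Let `A` be a unital C*-algebra and let `s, v ∈ A` be isometries with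
`‖s − v‖ < 2/(4√2 + 1)`.  Then `s` and `v` are homotopic through isometries: there is a
norm-continuous path `w : [0,1] → A` with `w 0 = s`, `w 1 = v` and `w(t)* w(t) = 1` for all `t`. -/
theorem stmt_5 {A : Type*} [CStarAlgebra A]
    (s v : A) (hs : star s * s = 1) (hv : star v * v = 1)
    (h : ‖s - v‖ < 2 / (4 * Real.sqrt 2 + 1)) :
    ∃ w : C(unitInterval, A), w 0 = s ∧ w 1 = v ∧ ∀ t, star (w t) * w t = 1 := by
  refine exists_path_isometry_of_norm_sub_lt hs hv (h.trans_le ?_)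
  have h2 : √2 ^ 2 = 2 := Real.sq_sqrt zero_le_two
  rw [div_le_iff₀ (by positivity)]
  nlinarith [Real.sqrt_nonneg 2]
end

section
/- Let A be a unital C*-algebra, let u ∈ A be a unitary, let s ∈ A be an isometry, and let m ≥ 0 be an integer. Suppose that the elements diag(u, 1_m) and diag(s, 1_m) of M_{1+m}(A) are connected by a norm-continuous path lying entirely inside the set of nonzero hyponormal partial isometries of M_{1+m}(A). Then s is a unitary, i.e. ss* = 1. -/
/-- `w` is a hyponormal partial isometry: `w w* w = w` and `w* w ≥ w w*`.  In a C*-algebra,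
an element is nonnegative if and only if it is of the form `b* b`, which is how the
inequality `w* w − w w* ≥ 0` is expressed here. -/
def IsHyponormalPartialIsometry {A : Type*} [NonUnitalRing A] [StarRing A] (w : A) : Prop :=
  w * star w * w = w ∧ ∃ b : A, star w * w - w * star w = star b * b

/-- In a C*-algebra, a finite sum of elements of the form `star a * a` vanishes only if
each term vanishes. -/
lemma aux_sum_sq_zero {A : Type*} [CStarAlgebra A] {ι : Type*} (s : Finset ι) (f : ι → A)
    (h : ∑ i ∈ s, star (f i) * f i = 0) : ∀ i ∈ s, f i = 0 := by
  letI := CStarAlgebra.spectralOrder A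
  haveI := CStarAlgebra.spectralOrderedRing A
  intro i hi
  have := (Finset.sum_eq_zero_iff_of_nonneg (fun j _ => star_mul_self_nonneg (f j))).mp h i hi
  exact (CStarRing.star_mul_self_eq_zero_iff _).mp this

/-- If `star x * x + star y * y = 0` for matrices over a C*-algebra, then `y = 0`. -/
lemma aux_mat {A : Type*} [CStarAlgebra A] {n : ℕ} {x y : Matrix (Fin n) (Fin n) A}
    (h : star x * x + star y * y = 0) : y = 0 := by
  ext k j
  set g : Fin n ⊕ Fin n → A := Sum.elim (fun k => x k j) (fun k => y k j) with hg
  have hsum : ∑ i : Fin n ⊕ Fin n, star (g i) * g i = 0 := by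
    rw [Fintype.sum_sum_type]
    simp only [hg, Sum.elim_inl, Sum.elim_inr]
    have h0 : (star x * x + star y * y) j j = (0 : Matrix (Fin n) (Fin n) A) j j := by rw [h]
    simpa [Matrix.add_apply, Matrix.mul_apply, Matrix.star_apply, Matrix.zero_apply] using h0
  have := aux_sum_sq_zero Finset.univ g hsum (Sum.inr k) (Finset.mem_univ _)
  simpa [hg] using this

/-- A purely algebraic computation. -/
lemma ring_aux {R : Type*} [Ring R] [StarRing R] (p q b : R)
    (hp2 : p * p = p) (hq2 : q * q = q) (hps : star p = p) (hqs : star q = q)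
    (hb : p - q = star b * b) :
    star (b * q) * (b * q) + star (q - p * q) * (q - p * q) = 0 := by
  have e1 : star (b * q) * (b * q) = q * (p * q) - q := by
    calc star (b * q) * (b * q) = (star q * star b) * (b * q) := by rw [star_mul]
    _ = (q * star b) * (b * q) := by rw [hqs]
    _ = q * (star b * (b * q)) := by rw [mul_assoc]
    _ = q * ((star b * b) * q) := by rw [mul_assoc (star b) b q]
    _ = q * ((p - q) * q) := by rw [← hb]
    _ = q * (p * q - q * q) := by rw [sub_mul]
    _ = q * (p * q) - q * (q * q) := by rw [mul_sub]
    _ = q * (p * q) - q := by rw [hq2, hq2]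
  have e2 : star (q - p * q) * (q - p * q) = q - q * (p * q) := by
    have hsy : star (q - p * q) = q - q * p := by
      rw [star_sub, star_mul, hps, hqs]
    rw [hsy, sub_mul, mul_sub, mul_sub]
    have h1 : q * p * q = q * (p * q) := by rw [mul_assoc]
    have h2 : q * p * (p * q) = q * (p * q) := by
      rw [mul_assoc, ← mul_assoc p p q, hp2]
    rw [h1, h2, hq2]
    abel
  rw [e1, e2]
  abel

/-- For a hyponormal partial isometry `w` (in a matrix algebra over a C*-algebra), the
difference `star w * w - w * star w` is idempotent. -/
lemma diff_idem {A : Type*} [CStarAlgebra A] {n : ℕ} {w : Matrix (Fin n) (Fin n) A}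
    (hw : IsHyponormalPartialIsometry w) :
    (star w * w - w * star w) * (star w * w - w * star w) = star w * w - w * star w := by
  obtain ⟨hpi, b, hb⟩ := hw
  set p := star w * w with hp
  set q := w * star w with hq
  have hpi' : w * (star w * w) = w := by rw [← mul_assoc]; exact hpi
  have hp2 : p * p = p := by
    rw [hp, mul_assoc, hpi']
  have hq2 : q * q = q := by
    rw [hq, ← mul_assoc, hpi]
  have hps : star p = p := by rw [hp, star_mul, star_star]
  have hqs : star q = q := by rw [hq, star_mul, star_star]
  have key := ring_aux p q b hp2 hq2 hps hqs hb
  have hy0 : q - p * q = 0 := aux_mat key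
  have hpq : p * q = q := by
    have := sub_eq_zero.mp hy0; exact this.symm
  have hqp : q * p = q := by
    have := congrArg star hpq
    rwa [star_mul, hps, hqs] at this
  calc (p - q) * (p - q) = p * p - p * q - (q * p - q * q) := by
        rw [sub_mul, mul_sub, mul_sub]
  _ = p - q - (q - q) := by rw [hp2, hq2, hpq, hqp]
  _ = p - q := by abel

/-- An idempotent matrix over a C*-algebra with all entries of norm `< 1/n` is zero. -/
lemma idem_small_eq_zero {A : Type*} [CStarAlgebra A] {n : ℕ}
    {p : Matrix (Fin n) (Fin n) A} (hp : p * p = p)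
    (hsmall : ∀ i j, ‖p i j‖ < 1 / n) : p = 0 := by
  by_contra hne
  have hex : ∃ a b, p a b ≠ 0 := by
    by_contra hc
    push_neg at hc
    exact hne (by ext a b; simpa using hc a b)
  obtain ⟨a, b, hab⟩ := hex
  have hn : 0 < n := by
    rcases Nat.eq_zero_or_pos n with h0 | h0
    · exact absurd a.2 (by simp [h0])
    · exact h0
  obtain ⟨⟨i, j⟩, -, hmax⟩ := Finset.exists_max_image (Finset.univ ×ˢ Finset.univ)
    (fun q : Fin n × Fin n => ‖p q.1 q.2‖) ⟨(a, b), by simp⟩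
  have hmax' : ∀ c d, ‖p c d‖ ≤ ‖p i j‖ := fun c d => hmax (c, d) (by simp)
  have hMpos : 0 < ‖p i j‖ :=
    lt_of_lt_of_le (norm_pos_iff.mpr hab) (hmax' a b)
  have hlt : ‖p i j‖ < ‖p i j‖ := by
    conv_lhs => rw [← hp]
    calc ‖(p * p) i j‖ = ‖∑ k, p i k * p k j‖ := by rw [Matrix.mul_apply]
    _ ≤ ∑ k, ‖p i k * p k j‖ := norm_sum_le _ _
    _ ≤ ∑ k, ‖p i k‖ * ‖p k j‖ := Finset.sum_le_sum fun k _ => norm_mul_le _ _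
    _ < ∑ _k : Fin n, ‖p i j‖ * (1 / n) := by
        refine Finset.sum_lt_sum_of_nonempty ⟨i, Finset.mem_univ i⟩ fun k _ => ?_
        calc ‖p i k‖ * ‖p k j‖ ≤ ‖p i j‖ * ‖p k j‖ :=
              mul_le_mul_of_nonneg_right (hmax' i k) (norm_nonneg _)
        _ < ‖p i j‖ * (1 / n) := by
              exact mul_lt_mul_of_pos_left (hsmall k j) hMpos
    _ = ‖p i j‖ := by
        rw [Finset.sum_const, Finset.card_univ, Fintype.card_fin, nsmul_eq_mul]
        field_simp
  exact absurd hlt (lt_irrefl _)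

/-- Let `A` be a unital C*-algebra, `u ∈ A` a unitary, `s ∈ A` an isometry and
`m ≥ 0`.  If `diag(u, 1_m)` and `diag(s, 1_m)` are connected by a norm-continuous path inside
the set of nonzero hyponormal partial isometries of `M_{1+m}(A)`, then `s` is a unitary.
(The C*-norm topology on `M_{1+m}(A)` coincides with the product (entrywise) topology, which is
the canonical topology on `Matrix` used here.) -/
theorem stmt_6 {A : Type*} [CStarAlgebra A]
    (u s : A) (hu : u ∈ unitary A) (hs : star s * s = 1) (m : ℕ)
    (h : ∃ w : C(unitInterval, Matrix (Fin (1 + m)) (Fin (1 + m)) A),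
        w 0 = Matrix.diagonal (fun i : Fin (1 + m) => if (i : ℕ) = 0 then u else 1) ∧
        w 1 = Matrix.diagonal (fun i : Fin (1 + m) => if (i : ℕ) = 0 then s else 1) ∧
        ∀ t, w t ≠ 0 ∧ IsHyponormalPartialIsometry (w t)) :
    s * star s = 1 := by
  obtain ⟨w, hw0, hw1, hw⟩ := h
  haveI : NeZero (1 + m) := ⟨by omega⟩
  set D : unitInterval → Matrix (Fin (1 + m)) (Fin (1 + m)) A :=
    fun t => star (w t) * (w t) - (w t) * star (w t) with hD
  have hD2 : ∀ t, D t * D t = D t := fun t => diff_idem (hw t).2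
  have hwc : Continuous fun t : unitInterval => w t := w.continuous
  have hDcont : Continuous D := by
    have h1 : Continuous fun t : unitInterval => star (w t) :=
      continuous_matrix fun i j => ((hwc.matrix_elem j i).star)
    exact ((h1.matrix_mul hwc).sub (hwc.matrix_mul h1))
  set S : Set unitInterval := {t | D t = 0} with hS
  have hSclosed : IsClosed S := isClosed_eq hDcont continuous_const
  have hSopen : IsOpen S := by
    have heq : S = ⋂ i, ⋂ j, {t | ‖D t i j‖ < 1 / (1 + m : ℕ)} := by
      ext t
      simp only [hS, Set.mem_setOf_eq, Set.mem_iInter]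
      constructor
      · intro ht i j
        rw [ht]
        simp only [Matrix.zero_apply, norm_zero]
        positivity
      · intro ht
        exact idem_small_eq_zero (hD2 t) ht
    rw [heq]
    refine isOpen_iInter_of_finite fun i => isOpen_iInter_of_finite fun j => ?_
    exact isOpen_lt (hDcont.matrix_elem i j).norm continuous_const
  have h0mem : (0 : unitInterval) ∈ S := by
    have hu1 : star u * u = 1 := hu.1
    have hu2 : u * star u = 1 := hu.2
    show D 0 = 0
    rw [hD]
    simp only [hw0]
    rw [Matrix.star_eq_conjTranspose, Matrix.diagonal_conjTranspose,
      Matrix.diagonal_mul_diagonal, Matrix.diagonal_mul_diagonal, sub_eq_zero]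
    refine congrArg Matrix.diagonal (funext fun i => ?_)
    simp only [Pi.star_apply, Pi.mul_apply]
    by_cases hi : (i : ℕ) = 0 <;> simp [hi, hu1, hu2]
  have hSuniv : S = Set.univ :=
    (isClopen_iff.mp ⟨hSclosed, hSopen⟩).resolve_left (Set.nonempty_iff_ne_empty.mp ⟨0, h0mem⟩)
  have h1mem : D 1 = 0 := by
    have : (1 : unitInterval) ∈ S := by rw [hSuniv]; trivial
    exact this
  rw [hD] at h1mem
  simp only [hw1] at h1mem
  rw [Matrix.star_eq_conjTranspose, Matrix.diagonal_conjTranspose,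
    Matrix.diagonal_mul_diagonal, Matrix.diagonal_mul_diagonal, sub_eq_zero] at h1mem
  have e := congrFun (congrFun h1mem (0 : Fin (1 + m))) (0 : Fin (1 + m))
  simp only [Matrix.diagonal_apply_eq, Pi.star_apply, Fin.val_zero, if_true,
    eq_self_iff_true, if_pos] at e
  rw [hs] at e
  exact e.symm
end

section
/- Let E and A be unital C*-algebras and let ψ : E → A be a surjective unital *-homomorphism with kernel B. Assume: (1) every hereditary C*-subalgebra of B has an approximate identity consisting of projections; (2) every projection in A lifts to a projection in E, i.e. for every projection p̄ ∈ A there is a projection p ∈ E with ψ(p) = p̄. Let n ≥ 1 and let (ē_{ij})_{1 ≤ i,j ≤ n} be a system of matrix units in A with Σ_{i=1}^n ē_{ii} = 1_A (so the ē_{ij} span a unital copy of M_n(ℂ) inside A). Then there exists a system of matrix units (e_{ij})_{1 ≤ i,j ≤ n} in E with ψ(e_{ij}) = ē_{ij} for all i, j; in particular 1_E − Σ_{i=1}^n e_{ii} ∈ B. -/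
set_option linter.unusedSectionVars false
set_option maxHeartbeats 1000000

/-- The set `C` has an approximate identity consisting of projections: there is a net (indexed
by a nonempty directed preordered type) of projections belonging to `C` which is an approximate
identity for `C`. -/
def HasApproxUnitOfProjections {E : Type*} [NonUnitalNormedRing E] [StarRing E]
    (C : Set E) : Prop :=
  ∃ (ι : Type) (le : ι → ι → Prop) (p : ι → E),
    Nonempty ι ∧
    (∀ i, le i i) ∧
    (∀ i j k, le i j → le j k → le i k) ∧
    (∀ i j, ∃ k, le i k ∧ le j k) ∧
    (∀ i, p i ∈ C ∧ star (p i) = p i ∧ p i * p i = p i) ∧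
    (∀ c ∈ C, ∀ ε : ℝ, 0 < ε → ∃ i, ∀ j, le i j → ‖p j * c - c‖ < ε)

section AuxStmt7

variable {E A : Type*} [CStarAlgebra E] [CStarAlgebra A] [PartialOrder E] [StarOrderedRing E]

lemma aux_proj_norm_le_one {e : E} (hs : star e = e) (h2 : e * e = e) : ‖e‖ ≤ 1 := by
  have h := CStarRing.norm_star_mul_self (x := e)
  rw [hs, h2] at h
  nlinarith [norm_nonneg e]

lemma aux_mul_proj {v q : E} (hqs : star q = q) (hq2 : q * q = q)
    (h : star v * v = q) : v * q = v := by
  have key : star (v * q - v) * (v * q - v) = 0 := by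
    have expand : star (v * q - v) * (v * q - v) =
        q * (star v * v) * q - q * (star v * v) - (star v * v) * q + star v * v := by
      rw [star_sub, star_mul, hqs]; noncomm_ring
    rw [expand, h]
    have h3 : q * q * q = q := by rw [hq2, hq2]
    rw [h3, hq2]; abel
  have := (CStarRing.star_mul_self_eq_zero_iff _).mp key
  rwa [sub_eq_zero] at this

lemma aux_exists_upper {ι : Type} (le : ι → ι → Prop) (hne : Nonempty ι)
    (htrans : ∀ i j k, le i j → le j k → le i k)
    (hdir : ∀ i j, ∃ k, le i k ∧ le j k) :
    ∀ (m : ℕ) (f : Fin m → ι), ∃ K, ∀ i, le (f i) K := by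
  intro m
  induction m with
  | zero => exact fun f => ⟨hne.some, fun i => i.elim0⟩
  | succ m ih =>
    intro f
    obtain ⟨K, hK⟩ := ih (f ∘ Fin.succ)
    obtain ⟨K', h1, h2⟩ := hdir (f 0) K
    exact ⟨K', fun i => Fin.cases h1 (fun j => htrans _ _ _ (hK j) h2) i⟩

lemma aux_cont (ψ : E →⋆ₐ[ℂ] A) : Continuous ψ :=
  AddMonoidHomClass.continuous_of_bound ψ 1 fun a => by
    simpa using NonUnitalStarAlgHom.norm_apply_le ψ a

-- helper : two-sided absorption from corner membership
lemma aux_corner_sides {q x : E} (hq2 : q * q = q) (hx : q * x * q = x) :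
    q * x = x ∧ x * q = x := by
  constructor
  · calc q * x = q * (q * x * q) := by rw [hx]
    _ = (q * q) * x * q := by noncomm_ring
    _ = q * x * q := by rw [hq2]
    _ = x := hx
  · calc x * q = (q * x * q) * q := by rw [hx]
    _ = q * x * (q * q) := by noncomm_ring
    _ = q * x * q := by rw [hq2]
    _ = x := hx

lemma aux_corner_proj (ψ : E →⋆ₐ[ℂ] A)
    (h1 : ∀ C : NonUnitalStarSubalgebra ℂ E,
      (C : Set E) ⊆ {x : E | ψ x = 0} → IsClosed (C : Set E) →
      (∀ c ∈ C, ∀ b : E, ψ b = 0 → 0 ≤ b → b ≤ c → b ∈ C) →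
      HasApproxUnitOfProjections (C : Set E))
    (q : E) (hqs : star q = q) (hq2 : q * q = q)
    (m : ℕ) (b : Fin m → E) (hbk : ∀ i, ψ (b i) = 0) (hbc : ∀ i, q * b i * q = b i) :
    ∃ e : E, ψ e = 0 ∧ star e = e ∧ e * e = e ∧ q * e = e ∧ e * q = e ∧
      ∀ i, ‖b i - e * b i‖ < 2⁻¹ := by
  -- the corner of the kernel
  set C : NonUnitalStarSubalgebra ℂ E :=
    { carrier := {x : E | ψ x = 0 ∧ q * x * q = x}
      add_mem' := by
        rintro x y ⟨hx1, hx2⟩ ⟨hy1, hy2⟩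
        constructor
        · simp [map_add, hx1, hy1]
        · rw [mul_add, add_mul, hx2, hy2]
      zero_mem' := by simp
      mul_mem' := by
        rintro x y ⟨hx1, hx2⟩ ⟨hy1, hy2⟩
        constructor
        · simp [map_mul, hx1]
        · have hxq : x * q = x := by
            calc x * q = (q * x * q) * q := by rw [hx2]
            _ = q * x * (q * q) := by noncomm_ring
            _ = q * x * q := by rw [hq2]
            _ = x := hx2
          have hqy : q * y = y := by
            calc q * y = q * (q * y * q) := by rw [hy2]
            _ = (q * q) * y * q := by noncomm_ring
            _ = q * y * q := by rw [hq2]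
            _ = y := hy2
          calc q * (x * y) * q = (q * x) * (y * q) := by noncomm_ring
          _ = (q * (x * q)) * ((q * y) * q) := by rw [hxq, hqy]
          _ = (q * x * q) * (q * y * q) := by noncomm_ring
          _ = x * y := by rw [hx2, hy2]
      smul_mem' := by
        rintro c x ⟨hx1, hx2⟩
        constructor
        · simp [hx1]
        · rw [mul_smul_comm, smul_mul_assoc, hx2]
      star_mem' := by
        rintro x ⟨hx1, hx2⟩
        constructor
        · simp [map_star, hx1]
        · have := congrArg star hx2
          rw [star_mul, star_mul, hqs] at this
          rw [mul_assoc]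
          exact this
    } with hC
  have hmem : ∀ x : E, x ∈ C ↔ ψ x = 0 ∧ q * x * q = x := fun x => Iff.rfl
  have hsub : (C : Set E) ⊆ {x : E | ψ x = 0} := fun x hx => hx.1
  have hclosed : IsClosed (C : Set E) := by
    have h1 : IsClosed {x : E | ψ x = 0} :=
      isClosed_singleton.preimage (aux_cont ψ)
    have h2 : IsClosed {x : E | q * x * q = x} := by
      apply isClosed_eq
      · exact (continuous_const.mul continuous_id).mul continuous_const
      · exact continuous_id
    exact h1.inter h2
  have hher : ∀ c ∈ C, ∀ b : E, ψ b = 0 → 0 ≤ b → b ≤ c → b ∈ C := by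
    intro c hc x hψx hx0 hxc
    refine ⟨hψx, ?_⟩
    set s : E := 1 - q with hs
    have hss : star s = s := by simp [hs, hqs]
    have hsx0 : s * x * s = 0 := by
      have hle1 : s * x * s ≤ s * c * s := by
        have := star_left_conjugate_nonneg (sub_nonneg.mpr hxc) s
        rw [hss] at this
        have expand : s * (c - x) * s = s * c * s - s * x * s := by noncomm_ring
        rw [expand] at this
        exact sub_nonneg.mp this
      have hge0 : (0 : E) ≤ s * x * s := by
        have := star_left_conjugate_nonneg hx0 s
        rwa [hss] at this
      have hcs : s * c * s = 0 := by
        have hcq : q * c * q = c := hc.2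
        conv_lhs => rw [← hcq]
        have hsq : s * q = 0 := by rw [hs, sub_mul, one_mul, hq2, sub_self]
        calc s * (q * c * q) * s = (s * q) * c * (q * s) := by noncomm_ring
        _ = 0 := by rw [hsq]; simp
      rw [hcs] at hle1
      exact le_antisymm hle1 hge0
    -- deduce x * s = 0 via the square root
    have hxs : x * s = 0 := by
      set t : E := CFC.sqrt x with ht
      have ht0 : (0 : E) ≤ t := CFC.sqrt_nonneg (a := x)
      have hts : star t = t := IsSelfAdjoint.of_nonneg ht0
      have htt : t * t = x := CFC.sqrt_mul_sqrt_self x hx0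
      have hts0 : t * s = 0 := by
        have : star (t * s) * (t * s) = 0 := by
          rw [star_mul, hss, hts]
          calc s * t * (t * s) = s * (t * t) * s := by noncomm_ring
          _ = 0 := by rw [htt, hsx0]
        exact (CStarRing.star_mul_self_eq_zero_iff _).mp this
      calc x * s = t * (t * s) := by rw [← mul_assoc, htt]
      _ = 0 := by rw [hts0, mul_zero]
    have hxq : x * q = x := by
      have : x * (1 - q) = 0 := hxs
      rw [mul_sub, mul_one, sub_eq_zero] at this
      exact this.symm
    have hqx : q * x = x := by
      have hxsa : star x = x := IsSelfAdjoint.of_nonneg hx0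
      calc q * x = star (star x * star q) := by simp
      _ = star (x * q) := by rw [hxsa, hqs]
      _ = x := by rw [hxq, hxsa]
    rw [mul_assoc, hxq, hqx]
  obtain ⟨ι, le, p, hne, hrefl, htrans, hdir, hproj, happ⟩ := h1 C hsub hclosed hher
  -- choose for each i an index
  have hbmem : ∀ i, b i ∈ C := fun i => ⟨hbk i, hbc i⟩
  have hchoice : ∀ i : Fin m, ∃ k, ∀ j, le k j → ‖p j * b i - b i‖ < 2⁻¹ := fun i =>
    happ (b i) (hbmem i) 2⁻¹ (by norm_num)
  choose k hk using hchoice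
  obtain ⟨K, hK⟩ := aux_exists_upper le hne htrans hdir m k
  obtain ⟨hpmem, hps, hpp⟩ := hproj K
  obtain ⟨hpk, hpq⟩ : ψ (p K) = 0 ∧ q * p K * q = p K := hpmem
  refine ⟨p K, hpk, hps, hpp, ?_, ?_, ?_⟩
  · calc q * p K = q * (q * p K * q) := by rw [hpq]
    _ = (q * q) * p K * q := by noncomm_ring
    _ = q * p K * q := by rw [hq2]
    _ = p K := hpq
  · calc p K * q = (q * p K * q) * q := by rw [hpq]
    _ = q * p K * (q * q) := by noncomm_ring
    _ = q * p K * q := by rw [hq2]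
    _ = p K := hpq
  · intro i
    rw [norm_sub_rev]
    exact hk i K (hK i)

-- The conjugation by a self-adjoint unitary, as a star algebra homomorphism.
noncomputable def aux_conj (u : E) (hu : u * u = 1) (hus : star u = u) : E →⋆ₐ[ℂ] E where
  toFun x := u * x * u
  map_one' := by show u * 1 * u = 1; rw [mul_one, hu]
  map_mul' x y := by
    calc u * (x * y) * u = u * (x * (1 : E)) * (y * u) := by noncomm_ring
    _ = u * (x * (u * u)) * (y * u) := by rw [hu]
    _ = (u * x * u) * (u * y * u) := by noncomm_ring
  map_zero' := by simp
  map_add' x y := by noncomm_ring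
  commutes' z := by
    simp only [Algebra.algebraMap_eq_smul_one]
    rw [mul_smul_comm, mul_one, smul_mul_assoc, hu]
  map_star' x := by
    show u * star x * u = star (u * x * u)
    rw [star_mul, star_mul, hus, mul_assoc]

lemma aux_conj_apply (u : E) (hu : u * u = 1) (hus : star u = u) (x : E) :
    aux_conj u hu hus x = u * x * u := rfl

lemma aux_conj_cont (u : E) (hu : u * u = 1) (hus : star u = u) :
    Continuous (aux_conj u hu hus) := by
  show Continuous fun x => u * x * u
  exact (continuous_const.mul continuous_id).mul continuous_const

-- the key correction lemma
lemma aux_correct (ψ : E →⋆ₐ[ℂ] A)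
    (hcorner : ∀ (q : E), star q = q → q * q = q →
      ∀ (m : ℕ) (b : Fin m → E), (∀ i, ψ (b i) = 0) → (∀ i, q * b i * q = b i) →
      ∃ e : E, ψ e = 0 ∧ star e = e ∧ e * e = e ∧ q * e = e ∧ e * q = e ∧
        ∀ i, ‖b i - e * b i‖ < 2⁻¹)
    (q : E) (hqs : star q = q) (hq2 : q * q = q)
    (m : ℕ) (w : Fin m → E)
    (hwq : ∀ i, w i * q = w i)
    (horth : ∀ i j, i ≠ j → star (w i) * w j = 0)
    (hker : ∀ i, ψ (star (w i) * w i) = ψ q) :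
    ∃ (q' : E) (v : Fin m → E),
      star q' = q' ∧ q' * q' = q' ∧ q * q' = q' ∧ q' * q = q' ∧ ψ q' = ψ q ∧
      (∀ i, ψ (v i) = ψ (w i)) ∧
      (∀ i j, star (v i) * v j = if i = j then q' else 0) ∧
      (∀ i, ∃ y, v i = w i * y) := by
  classical
  rcases subsingleton_or_nontrivial E with hE | hE
  · exact ⟨q, w, Subsingleton.elim _ _, Subsingleton.elim _ _, Subsingleton.elim _ _,
      Subsingleton.elim _ _, rfl, fun i => rfl,
      fun i j => Subsingleton.elim _ _, fun i => ⟨q, Subsingleton.elim _ _⟩⟩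
  set b : Fin m → E := fun i => q - star (w i) * w i with hbdef
  have hqw : ∀ i, q * star (w i) = star (w i) := by
    intro i
    have := congrArg star (hwq i)
    rwa [star_mul, hqs] at this
  have hb1 : ∀ i, ψ (b i) = 0 := by
    intro i; simp only [hbdef, map_sub, hker, sub_self]
  have hbsa : ∀ i, star (b i) = b i := by
    intro i
    simp only [hbdef, star_sub, hqs, star_mul, star_star]
  have hbc : ∀ i, q * b i * q = b i := by
    intro i
    have h1 : q * (star (w i) * w i) * q = star (w i) * w i := by
      calc q * (star (w i) * w i) * q = (q * star (w i)) * (w i * q) := by noncomm_ring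
      _ = star (w i) * w i := by rw [hqw i, hwq i]
    calc q * b i * q = q * q * q - q * (star (w i) * w i) * q := by
          rw [hbdef]; noncomm_ring
    _ = q - star (w i) * w i := by rw [hq2, hq2, h1]
    _ = b i := rfl
  obtain ⟨e, hek, hes, he2, hqe, heq, hnorm⟩ := hcorner q hqs hq2 m b hb1 hbc
  set q' : E := q - e with hq'def
  have hq's : star q' = q' := by rw [hq'def, star_sub, hqs, hes]
  have hq'2 : q' * q' = q' := by
    calc q' * q' = q * q - q * e - e * q + e * e := by rw [hq'def]; noncomm_ring
    _ = q - e - e + e := by rw [hq2, hqe, heq, he2]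
    _ = q - e := by abel
  have hqq' : q * q' = q' := by
    calc q * q' = q * q - q * e := by rw [hq'def]; noncomm_ring
    _ = q - e := by rw [hq2, hqe]
  have hq'q : q' * q = q' := by
    calc q' * q = q * q - e * q := by rw [hq'def]; noncomm_ring
    _ = q - e := by rw [hq2, heq]
  have hψq' : ψ q' = ψ q := by rw [hq'def, map_sub, hek, sub_zero]
  have hq'norm : ‖q'‖ ≤ 1 := aux_proj_norm_le_one hq's hq'2
  -- the small elements
  set c : Fin m → E := fun i => -(q' * b i * q') with hcdef
  have hcsa : ∀ i, star (c i) = c i := by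
    intro i
    simp only [hcdef, star_neg, star_mul, hq's, hbsa, star_star]
    rw [mul_assoc]
  have hsa_c : ∀ i, IsSelfAdjoint (c i) := fun i => hcsa i
  have hqb : ∀ i, q * b i = b i := fun i => (aux_corner_sides hq2 (hbc i)).1
  have hq'b : ∀ i, q' * b i = b i - e * b i := by
    intro i
    calc q' * b i = q * b i - e * b i := by rw [hq'def]; noncomm_ring
    _ = b i - e * b i := by rw [hqb i]
  have hcnorm : ∀ i, ‖c i‖ < 2⁻¹ := by
    intro i
    calc ‖c i‖ = ‖(q' * b i) * q'‖ := by rw [hcdef]; rw [norm_neg]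
    _ ≤ ‖q' * b i‖ * ‖q'‖ := norm_mul_le _ _
    _ ≤ ‖q' * b i‖ * 1 := by
        apply mul_le_mul_of_nonneg_left hq'norm (norm_nonneg _)
    _ = ‖b i - e * b i‖ := by rw [mul_one, hq'b i]
    _ < 2⁻¹ := hnorm i
  have hq'c : ∀ i, q' * c i = c i := by
    intro i
    calc q' * c i = -((q' * q') * b i * q') := by rw [hcdef]; noncomm_ring
    _ = c i := by rw [hq'2, hcdef]
  have hcq' : ∀ i, c i * q' = c i := by
    intro i
    calc c i * q' = -(q' * b i * (q' * q')) := by rw [hcdef]; noncomm_ring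
    _ = c i := by rw [hq'2, hcdef]
  have hψc : ∀ i, ψ (c i) = 0 := by
    intro i
    simp only [hcdef, map_neg, map_mul, hb1, mul_zero, zero_mul, neg_zero]
  -- the middle identity
  have hmid : ∀ i, q' * (star (w i) * w i) * q' = q' + c i := by
    intro i
    have hqb' : star (w i) * w i = q - b i := by
      simp only [hbdef]
      rw [sub_sub_cancel]
    calc q' * (star (w i) * w i) * q' = q' * q * q' - q' * b i * q' := by
          rw [hqb']; noncomm_ring
    _ = q' * q' - q' * b i * q' := by rw [hq'q]
    _ = q' + c i := by rw [hq'2, hcdef]; abel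
  -- functional calculus
  set f : ℝ → ℝ := fun x => (Real.sqrt (max (1+x) 2⁻¹))⁻¹ with hfdef
  have hfc : Continuous f := by
    apply Continuous.inv₀
    · exact (Real.continuous_sqrt.comp ((continuous_const.add continuous_id).max continuous_const))
    · intro x
      refine ne_of_gt (Real.sqrt_pos.mpr ?_)
      exact lt_of_lt_of_le (by norm_num) (le_max_right _ _)
  set g : Fin m → E := fun i => cfc f (c i) with hgdef
  have hgsa : ∀ i, IsSelfAdjoint (g i) := fun i => cfc_predicate f (c i)
  have hcspec : ∀ i, ∀ x ∈ spectrum ℝ (c i), f x * f x * (1 + x) = 1 := by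
    intro i x hx
    have hxb : |x| < 2⁻¹ := by
      have := spectrum.norm_le_norm_of_mem hx
      rw [Real.norm_eq_abs] at this
      exact lt_of_le_of_lt this (hcnorm i)
    have h1x : (2:ℝ)⁻¹ ≤ 1 + x := by
      have := abs_lt.mp hxb
      linarith [this.1]
    have hpos : (0:ℝ) < 1 + x := by linarith [abs_lt.mp hxb |>.1]
    rw [hfdef]
    simp only [max_eq_left h1x]
    rw [← mul_inv]
    rw [Real.mul_self_sqrt (le_of_lt hpos)]
    exact inv_mul_cancel₀ (ne_of_gt hpos)
  have hone : ∀ i, (1:E) + c i = cfc (fun x : ℝ => 1 + x) (c i) := by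
    intro i
    have := cfc_const_add (R := ℝ) 1 id (c i) continuousOn_id (hsa_c i)
    simp only [id_eq, map_one] at this
    rw [this, cfc_id ℝ (c i) (hsa_c i)]
  have key1 : ∀ i, g i * g i * (1 + c i) = 1 := by
    intro i
    have e1 : cfc (fun x => f x * f x) (c i) = g i * g i :=
      cfc_mul f f (c i) hfc.continuousOn hfc.continuousOn
    have e2 : cfc (fun x => (f x * f x) * (1 + x)) (c i)
        = cfc (fun x => f x * f x) (c i) * cfc (fun x : ℝ => 1 + x) (c i) :=
      cfc_mul _ _ (c i) (by fun_prop) (by fun_prop)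
    have e3 : cfc (fun x => (f x * f x) * (1 + x)) (c i) = cfc (fun _ : ℝ => (1:ℝ)) (c i) :=
      cfc_congr (fun x hx => hcspec i x hx)
    have e4 : cfc (fun _ : ℝ => (1:ℝ)) (c i) = 1 := by
      rw [cfc_const 1 (c i) (hsa_c i), map_one]
    rw [hone i, ← e1, ← e2, e3, e4]
  have hcm : ∀ i, Commute (c i) (g i) := by
    intro i
    have := cfc_commute_cfc (R := ℝ) id f (c i)
    rwa [cfc_id ℝ (c i) (hsa_c i)] at this
  have key2 : ∀ i, (1 + c i) * (g i * g i) = 1 := by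
    intro i
    have hcm2 : Commute (g i * g i) (1 + c i) :=
      Commute.add_right (Commute.one_right _) ((hcm i).symm.mul_left (hcm i).symm)
    rw [← hcm2.eq]
    exact key1 i
  -- q' commutes with g i
  set u : E := 1 - q' - q' with hudef
  have hu : u * u = 1 := by
    have expand : u * u = 1 - (q'+q') - (q'+q') + (q' * q' + q' * q' + q' * q' + q' * q') := by
      rw [hudef]; noncomm_ring
    rw [expand, hq'2]
    abel
  have hus : star u = u := by rw [hudef, star_sub, star_sub, star_one, hq's]
  have hucu : ∀ i, u * c i * u = c i := by
    intro i
    have h5 : u * c i = - c i := by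
      calc u * c i = c i - q' * c i - q' * c i := by rw [hudef]; noncomm_ring
      _ = - c i := by rw [hq'c i]; abel
    have h6 : (- c i) * u = c i := by
      calc (- c i) * u = -(c i - c i * q' - c i * q') := by rw [hudef]; noncomm_ring
      _ = c i := by rw [hcq' i]; abel
    rw [h5, h6]
  have hugu : ∀ i, u * g i * u = g i := by
    intro i
    have := StarAlgHom.map_cfc (aux_conj u hu hus) f (c i) hfc.continuousOn
      (aux_conj_cont u hu hus) (hsa_c i)
      (by rw [aux_conj_apply, hucu i]; exact hsa_c i)
    rw [aux_conj_apply, aux_conj_apply, hucu i] at this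
    exact this
  have hq'g : ∀ i, q' * g i = g i * q' := by
    intro i
    have h7 : u * g i = g i * u := by
      calc u * g i = u * g i * (u * u) := by rw [hu, mul_one]
      _ = (u * g i * u) * u := by noncomm_ring
      _ = g i * u := by rw [hugu i]
    have h8 : g i - q' * g i - q' * g i = g i - g i * q' - g i * q' := by
      have := h7
      rw [hudef] at this
      calc g i - q' * g i - q' * g i = (1 - q' - q') * g i := by noncomm_ring
      _ = g i * (1 - q' - q') := this
      _ = g i - g i * q' - g i * q' := by noncomm_ring
    have hbb : q' * g i + q' * g i = g i * q' + g i * q' := by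
      have e1 : q' * g i + q' * g i = g i - (g i - q' * g i - q' * g i) := by abel
      rw [e1, h8]
      abel
    have h2s : (2:ℝ) • (q' * g i) = (2:ℝ) • (g i * q') := by
      rw [two_smul, two_smul]; exact hbb
    calc q' * g i = (2:ℝ)⁻¹ • ((2:ℝ) • (q' * g i)) := by rw [smul_smul]; norm_num
    _ = (2:ℝ)⁻¹ • ((2:ℝ) • (g i * q')) := by rw [h2s]
    _ = g i * q' := by rw [smul_smul]; norm_num
  -- ψ (g i) = 1
  have hψg : ∀ i, ψ (g i) = 1 := by
    intro i
    have hmap : ψ (g i) = cfc f (ψ (c i)) :=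
      StarAlgHom.map_cfc ψ f (c i) hfc.continuousOn (aux_cont ψ) (hsa_c i)
        (by rw [hψc i]; exact IsSelfAdjoint.zero A)
    rw [hmap, hψc i]
    have hz : spectrum ℝ (0 : A) ⊆ {0} := by
      intro x hx
      by_contra hx0
      have : IsUnit (algebraMap ℝ A x - 0) := by
        rw [sub_zero]
        exact (IsUnit.map (algebraMap ℝ A) (isUnit_iff_ne_zero.mpr hx0))
      exact (spectrum.notMem_iff.mpr this) hx
    have e5 : cfc f (0:A) = cfc (fun _ : ℝ => (1:ℝ)) (0:A) := by
      apply cfc_congr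
      intro x hx
      have hx0 : x = 0 := hz hx
      rw [hx0, hfdef]
      norm_num
    rw [e5, cfc_const 1 (0:A) (IsSelfAdjoint.zero A), map_one]
  -- define v
  refine ⟨q', fun i => w i * (q' * g i), hq's, hq'2, hqq', hq'q, hψq', ?_, ?_, ?_⟩
  · intro i
    rw [map_mul, map_mul, hψg i, mul_one, hψq', ← map_mul, hwq i]
  · intro i j
    have hstar : star (w i * (q' * g i)) = (g i * q') * star (w i) := by
      rw [star_mul, star_mul, hq's, (hgsa i).star_eq]
    by_cases hij : i = j
    · subst hij
      simp only [if_pos rfl]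
      rw [hstar]
      have assoc1 : (g i * q') * star (w i) * (w i * (q' * g i))
          = g i * (q' * (star (w i) * w i) * q') * g i := by noncomm_ring
      rw [assoc1, hmid i]
      have hq'c2 : q' + c i = q' * (1 + c i) := by
        rw [mul_add, mul_one, hq'c i]
      rw [hq'c2]
      calc g i * (q' * (1 + c i)) * g i = (g i * q') * ((1 + c i) * g i) := by noncomm_ring
      _ = (q' * g i) * ((1 + c i) * g i) := by rw [← hq'g i]
      _ = q' * (g i * ((1 + c i) * g i)) := by noncomm_ring
      _ = q' * (g i * (g i * (1 + c i))) := by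
            congr 1
            congr 1
            exact (Commute.add_left (Commute.one_left (g i)) (hcm i)).eq
      _ = q' * (g i * g i * (1 + c i)) := by noncomm_ring
      _ = q' * 1 := by rw [key1 i]
      _ = q' := mul_one q'
    · simp only [if_neg hij]
      rw [hstar]
      have assoc1 : (g i * q') * star (w i) * (w j * (q' * g j))
          = (g i * q') * (star (w i) * w j) * (q' * g j) := by noncomm_ring
      rw [assoc1, horth i j hij, mul_zero, zero_mul]
  · intro i
    exact ⟨q' * g i, rfl⟩

-- Lemma 3: lifting a projection under a given projection, given the correction lemma output
lemma aux_lift_under (ψ : E →⋆ₐ[ℂ] A)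
    (hcorrect : ∀ (q : E), star q = q → q * q = q →
      ∀ (m : ℕ) (w : Fin m → E), (∀ i, w i * q = w i) →
      (∀ i j, i ≠ j → star (w i) * w j = 0) →
      (∀ i, ψ (star (w i) * w i) = ψ q) →
      ∃ (q' : E) (v : Fin m → E),
        star q' = q' ∧ q' * q' = q' ∧ q * q' = q' ∧ q' * q = q' ∧ ψ q' = ψ q ∧
        (∀ i, ψ (v i) = ψ (w i)) ∧
        (∀ i j, star (v i) * v j = if i = j then q' else 0) ∧
        (∀ i, ∃ y, v i = w i * y))
    (h2 : ∀ q : A, star q = q → q * q = q →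
      ∃ p : E, star p = p ∧ p * p = p ∧ ψ p = q)
    (P : E) (hPs : star P = P) (hP2 : P * P = P)
    (qb : A) (hqbs : star qb = qb) (hqb2 : qb * qb = qb)
    (hle : ψ P * qb = qb) (hle' : qb * ψ P = qb) :
    ∃ Q : E, star Q = Q ∧ Q * Q = Q ∧ ψ Q = qb ∧ P * Q = Q ∧ Q * P = Q := by
  obtain ⟨p', hp's, hp'2, hp'ψ⟩ := h2 qb hqbs hqb2
  set w : Fin 1 → E := fun _ => P * p' with hwdef
  have hwq : ∀ i, w i * p' = w i := by
    intro i; simp only [hwdef]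
    rw [mul_assoc, hp'2]
  have horth : ∀ i j : Fin 1, i ≠ j → star (w i) * w j = 0 := by
    intro i j hij; exact absurd (Subsingleton.elim i j) hij
  have hker : ∀ i, ψ (star (w i) * w i) = ψ p' := by
    intro i
    simp only [hwdef, star_mul, hPs]
    rw [map_mul, map_mul, map_mul, hp'ψ]
    have : star (ψ p') = qb := by rw [hp'ψ, hqbs]
    rw [map_star, this]
    calc qb * ψ P * (ψ P * qb) = (qb * ψ P) * (ψ P * qb) := by noncomm_ring
    _ = qb * qb := by rw [hle, hle']
    _ = qb := hqb2
  obtain ⟨q', v, hq's, hq'2, hpq', hq'p, hψq', hψv, hvv, hvy⟩ :=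
    hcorrect p' hp's hp'2 1 w hwq horth hker
  set Q : E := v 0 * star (v 0) with hQdef
  have hvq' : star (v 0) * v 0 = q' := by
    have := hvv 0 0
    simpa using this
  have hvabs : v 0 * q' = v 0 := aux_mul_proj hq's hq'2 hvq'
  refine ⟨Q, ?_, ?_, ?_, ?_, ?_⟩
  · rw [hQdef, star_mul, star_star]
  · calc Q * Q = v 0 * (star (v 0) * v 0) * star (v 0) := by rw [hQdef]; noncomm_ring
    _ = v 0 * q' * star (v 0) := by rw [hvq']
    _ = Q := by rw [hvabs, hQdef]
  · have hψv0 : ψ (v 0) = qb := by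
      calc ψ (v 0) = ψ (P * p') := hψv 0
      _ = ψ P * qb := by rw [map_mul, hp'ψ]
      _ = qb := hle
    rw [hQdef, map_mul, map_star, hψv0, hqbs, hqb2]
  · have hPv : P * v 0 = v 0 := by
      obtain ⟨y, hy⟩ := hvy 0
      rw [hy]
      calc P * (w 0 * y) = ((P * P) * p') * y := by rw [hwdef]; noncomm_ring
      _ = (P * p') * y := by rw [hP2]
      _ = w 0 * y := by rw [hwdef]
    rw [hQdef, ← mul_assoc, hPv]
  · have hPv : P * v 0 = v 0 := by
      obtain ⟨y, hy⟩ := hvy 0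
      rw [hy]
      calc P * (w 0 * y) = ((P * P) * p') * y := by rw [hwdef]; noncomm_ring
      _ = (P * p') * y := by rw [hP2]
      _ = w 0 * y := by rw [hwdef]
    calc Q * P = v 0 * (star (v 0) * P) := by rw [hQdef]; noncomm_ring
    _ = v 0 * star (P * v 0) := by rw [star_mul, hPs]
    _ = Q := by rw [hPv, hQdef]

noncomputable def auxSbar {A : Type*} [CStarAlgebra A] (n : ℕ) (ebar : Fin n → Fin n → A)
    (k : ℕ) : A :=
  ∑ i ∈ Finset.univ.filter (fun i : Fin n => (i : ℕ) < k), ebar i i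

lemma auxSbar_star {n : ℕ} (ebar : Fin n → Fin n → A)
    (hstar : ∀ i j, star (ebar i j) = ebar j i) (k : ℕ) :
    star (auxSbar n ebar k) = auxSbar n ebar k := by
  rw [auxSbar, star_sum]
  exact Finset.sum_congr rfl fun i _ => hstar i i

lemma auxSbar_mul {n : ℕ} (ebar : Fin n → Fin n → A)
    (hmul : ∀ i j k l, ebar i j * ebar k l = if j = k then ebar i l else 0) (k l : ℕ) :
    auxSbar n ebar k * auxSbar n ebar l = auxSbar n ebar (min k l) := by
  classical
  rw [auxSbar, auxSbar, Finset.sum_mul_sum]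
  have step1 : ∀ i : Fin n,
      (∑ j ∈ Finset.univ.filter (fun j : Fin n => (j : ℕ) < l), ebar i i * ebar j j)
        = if i ∈ Finset.univ.filter (fun j : Fin n => (j : ℕ) < l) then ebar i i else 0 := by
    intro i
    have : ∀ j : Fin n, ebar i i * ebar j j = if i = j then ebar i j else 0 := fun j => hmul i i j j
    rw [Finset.sum_congr rfl fun j _ => this j]
    rw [Finset.sum_ite_eq]
  rw [Finset.sum_congr rfl fun i _ => step1 i]
  rw [Finset.sum_ite_mem]
  rw [auxSbar]
  congr 1
  ext i
  simp only [Finset.mem_inter, Finset.mem_filter, Finset.mem_univ, true_and]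
  omega

lemma auxSbar_top {n : ℕ} (ebar : Fin n → Fin n → A)
    (hsum : ∑ i, ebar i i = 1) : auxSbar n ebar n = 1 := by
  rw [auxSbar]
  rw [show Finset.univ.filter (fun i : Fin n => (i : ℕ) < n) = Finset.univ by
    ext i; simp [i.isLt]]
  exact hsum

lemma auxSbar_succ {n : ℕ} (ebar : Fin n → Fin n → A) (k : ℕ) (hk : k < n) :
    auxSbar n ebar (k + 1) = auxSbar n ebar k + ebar ⟨k, hk⟩ ⟨k, hk⟩ := by
  classical
  rw [auxSbar, auxSbar]
  have : Finset.univ.filter (fun i : Fin n => (i : ℕ) < k + 1)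
      = insert (⟨k, hk⟩ : Fin n) (Finset.univ.filter (fun i : Fin n => (i : ℕ) < k)) := by
    ext i
    simp only [Finset.mem_filter, Finset.mem_univ, true_and, Finset.mem_insert, Fin.ext_iff]
    omega
  rw [this, Finset.sum_insert (by simp)]
  exact add_comm _ _

lemma aux_chain (ψ : E →⋆ₐ[ℂ] A)
    (hlift : ∀ (P : E), star P = P → P * P = P → ∀ (qb : A), star qb = qb → qb * qb = qb →
      ψ P * qb = qb → qb * ψ P = qb →
      ∃ Q : E, star Q = Q ∧ Q * Q = Q ∧ ψ Q = qb ∧ P * Q = Q ∧ Q * P = Q)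
    {n : ℕ} (ebar : Fin n → Fin n → A)
    (hstar : ∀ i j, star (ebar i j) = ebar j i)
    (hmul : ∀ i j k l, ebar i j * ebar k l = if j = k then ebar i l else 0)
    (hsum : ∑ i, ebar i i = 1) :
    ∀ (j m : ℕ), m + j = n → ∃ P : ℕ → E,
      (∀ k, m ≤ k → k ≤ n →
        star (P k) = P k ∧ P k * P k = P k ∧ ψ (P k) = auxSbar n ebar k) ∧
      (∀ k l, m ≤ k → k ≤ l → l ≤ n → P k * P l = P k ∧ P l * P k = P k) := by
  intro j
  induction j with
  | zero =>
    intro m hm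
    rw [Nat.add_zero] at hm
    subst hm
    refine ⟨fun _ => 1, ?_, ?_⟩
    · intro k hk1 hk2
      have hk : k = m := le_antisymm hk2 hk1
      subst hk
      exact ⟨star_one E, one_mul 1, by rw [map_one, auxSbar_top ebar hsum]⟩
    · intro k l _ _ _
      exact ⟨one_mul 1, one_mul 1⟩
  | succ j ih =>
    intro m hm
    have hm1 : (m + 1) + j = n := by omega
    obtain ⟨P, hPk, hPchain⟩ := ih (m + 1) hm1
    have hm1n : m + 1 ≤ n := by omega
    have hmn : m < n := by omega
    obtain ⟨hPs, hP2, hPψ⟩ := hPk (m + 1) le_rfl hm1n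
    -- the projection sbar m in A
    have hqbs : star (auxSbar n ebar m) = auxSbar n ebar m := auxSbar_star ebar hstar m
    have hqb2 : auxSbar n ebar m * auxSbar n ebar m = auxSbar n ebar m := by
      rw [auxSbar_mul ebar hmul, min_self]
    have hle : ψ (P (m + 1)) * auxSbar n ebar m = auxSbar n ebar m := by
      rw [hPψ, auxSbar_mul ebar hmul]
      congr 1
      omega
    have hle' : auxSbar n ebar m * ψ (P (m + 1)) = auxSbar n ebar m := by
      rw [hPψ, auxSbar_mul ebar hmul]
      congr 1
      omega
    obtain ⟨Q, hQs, hQ2, hQψ, hPQ, hQP⟩ :=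
      hlift (P (m + 1)) hPs hP2 (auxSbar n ebar m) hqbs hqb2 hle hle'
    classical
    set P' : ℕ → E := fun k => if k = m then Q else P k with hP'def
    have hP'm : P' m = Q := by simp [hP'def]
    have hP'k : ∀ k, k ≠ m → P' k = P k := by
      intro k hk; simp [hP'def, hk]
    refine ⟨P', ?_, ?_⟩
    · intro k hk1 hk2
      by_cases hkm : k = m
      · rw [hkm, hP'm]
        exact ⟨hQs, hQ2, hQψ⟩
      · rw [hP'k k hkm]
        exact hPk k (by omega) hk2
    · intro k l hk hkl hl
      by_cases hkm : k = m
      · by_cases hlm : l = m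
        · rw [hkm, hlm, hP'm]
          exact ⟨hQ2, hQ2⟩
        · rw [hkm, hP'm, hP'k l hlm]
          have hl1 : m + 1 ≤ l := by omega
          have hchain := hPchain (m + 1) l le_rfl hl1 hl
          constructor
          · calc Q * P l = (Q * P (m + 1)) * P l := by rw [hQP]
            _ = Q * (P (m + 1) * P l) := by rw [mul_assoc]
            _ = Q * P (m + 1) := by rw [hchain.1]
            _ = Q := hQP
          · calc P l * Q = P l * (P (m + 1) * Q) := by rw [hPQ]
            _ = (P l * P (m + 1)) * Q := by rw [mul_assoc]
            _ = P (m + 1) * Q := by rw [hchain.2]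
            _ = Q := hPQ
      · have hlm : l ≠ m := by omega
        rw [hP'k k hkm, hP'k l hlm]
        exact hPchain k l (by omega) hkl hl


end AuxStmt7
/-- Let `ψ : E → A` be a surjective unital *-homomorphism of unital
C*-algebras with kernel `B`.  Assume (1) every hereditary C*-subalgebra of `B` has an
approximate identity consisting of projections, and (2) every projection in `A` lifts to a
projection in `E`.  If `(ē_{ij})` is a system of matrix units in `A` with `Σ ē_{ii} = 1`, then
there is a system of matrix units `(e_{ij})` in `E` with `ψ(e_{ij}) = ē_{ij}`; in particular
`1_E − Σ e_{ii} ∈ B`. -/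
theorem stmt_7 {E A : Type*} [CStarAlgebra E] [CStarAlgebra A]
    [PartialOrder E] [StarOrderedRing E]
    (ψ : E →⋆ₐ[ℂ] A) (hsurj : Function.Surjective ψ)
    (h1 : ∀ C : NonUnitalStarSubalgebra ℂ E,
      (C : Set E) ⊆ {x : E | ψ x = 0} → IsClosed (C : Set E) →
      (∀ c ∈ C, ∀ b : E, ψ b = 0 → 0 ≤ b → b ≤ c → b ∈ C) →
      HasApproxUnitOfProjections (C : Set E))
    (h2 : ∀ q : A, star q = q → q * q = q →
      ∃ p : E, star p = p ∧ p * p = p ∧ ψ p = q)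
    (n : ℕ) (hn : 0 < n) (ebar : Fin n → Fin n → A)
    (hstar : ∀ i j, star (ebar i j) = ebar j i)
    (hmul : ∀ i j k l, ebar i j * ebar k l = if j = k then ebar i l else 0)
    (hsum : ∑ i, ebar i i = 1) :
    ∃ e : Fin n → Fin n → E,
      (∀ i j, ψ (e i j) = ebar i j) ∧
      (∀ i j, star (e i j) = e j i) ∧
      (∀ i j k l, e i j * e k l = if j = k then e i l else 0) ∧
      (1 - ∑ i, e i i) ∈ {x : E | ψ x = 0} := by
  classical
  have hcorner := aux_corner_proj ψ h1
  have hcorrect := aux_correct ψ hcorner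
  have hlift := aux_lift_under ψ hcorrect h2
  obtain ⟨P, hPk0, hPchain0⟩ :=
    aux_chain ψ hlift ebar hstar hmul hsum n 0 (Nat.zero_add n)
  have hPk : ∀ k, k ≤ n →
      star (P k) = P k ∧ P k * P k = P k ∧ ψ (P k) = auxSbar n ebar k :=
    fun k hk => hPk0 k (Nat.zero_le k) hk
  have hchain : ∀ k l, k ≤ l → l ≤ n → P k * P l = P k ∧ P l * P k = P k :=
    fun k l h h' => hPchain0 k l (Nat.zero_le k) h h'
  -- the orthogonal projections p i lifting ebar i i
  set p : Fin n → E := fun i => P ((i : ℕ) + 1) - P (i : ℕ) with hpdef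
  have hps : ∀ i, star (p i) = p i := by
    intro i
    simp only [hpdef]
    rw [star_sub, (hPk _ i.isLt).1, (hPk _ (le_of_lt i.isLt)).1]
  have hp2 : ∀ i, p i * p i = p i := by
    intro i
    obtain ⟨hbab, hab⟩ := hchain (i : ℕ) ((i : ℕ) + 1) (by omega) i.isLt
    have haa := (hPk ((i : ℕ) + 1) i.isLt).2.1
    have hbb := (hPk (i : ℕ) (le_of_lt i.isLt)).2.1
    calc p i * p i
        = P ((i:ℕ)+1) * P ((i:ℕ)+1) - P ((i:ℕ)+1) * P (i:ℕ)
          - P (i:ℕ) * P ((i:ℕ)+1) + P (i:ℕ) * P (i:ℕ) := by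
          simp only [hpdef]; noncomm_ring
    _ = P ((i:ℕ)+1) - P (i:ℕ) - P (i:ℕ) + P (i:ℕ) := by rw [haa, hab, hbab, hbb]
    _ = p i := by simp only [hpdef]; abel
  have hψp : ∀ i, ψ (p i) = ebar i i := by
    intro i
    simp only [hpdef, map_sub]
    rw [(hPk _ i.isLt).2.2, (hPk _ (le_of_lt i.isLt)).2.2,
      auxSbar_succ ebar (i : ℕ) i.isLt]
    simp only [Fin.eta]
    exact add_sub_cancel_left _ _
  have hporth : ∀ i j : Fin n, i ≠ j → p i * p j = 0 := by
    have key : ∀ i j : Fin n, (i : ℕ) < (j : ℕ) → p i * p j = 0 := by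
      intro i j hij
      have h1' := hchain ((i:ℕ)+1) ((j:ℕ)+1) (by omega) j.isLt
      have h2' := hchain ((i:ℕ)+1) (j:ℕ) (by omega) (le_of_lt j.isLt)
      have h3' := hchain (i:ℕ) ((j:ℕ)+1) (by omega) j.isLt
      have h4' := hchain (i:ℕ) (j:ℕ) (by omega) (le_of_lt j.isLt)
      calc p i * p j
          = P ((i:ℕ)+1) * P ((j:ℕ)+1) - P ((i:ℕ)+1) * P (j:ℕ)
            - P (i:ℕ) * P ((j:ℕ)+1) + P (i:ℕ) * P (j:ℕ) := by
            simp only [hpdef]; noncomm_ring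
      _ = P ((i:ℕ)+1) - P ((i:ℕ)+1) - P (i:ℕ) + P (i:ℕ) := by
            rw [h1'.1, h2'.1, h3'.1, h4'.1]
      _ = 0 := by abel
    intro i j hij
    have hne : (i : ℕ) ≠ (j : ℕ) := by simpa [Fin.ext_iff] using hij
    rcases hne.lt_or_gt with h | h
    · exact key i j h
    · have h0 := key j i h
      calc p i * p j = star (star (p j) * star (p i)) := by rw [← star_mul, star_star]
      _ = star (p j * p i) := by rw [hps, hps]
      _ = 0 := by rw [h0, star_zero]
  -- the construction of the matrix units
  set i0 : Fin n := ⟨0, hn⟩ with hi0def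
  set q : E := p i0 with hqdef
  have hqs : star q = q := hps i0
  have hq2 : q * q = q := hp2 i0
  have hψq : ψ q = ebar i0 i0 := hψp i0
  choose x hx using fun i : Fin n => hsurj (ebar i i0)
  set w : Fin n → E := fun i => p i * x i * q with hwdef
  have hwq : ∀ i, w i * q = w i := by
    intro i
    calc w i * q = (p i * x i) * (q * q) := by simp only [hwdef]; noncomm_ring
    _ = (p i * x i) * q := by rw [hq2]
    _ = w i := by simp only [hwdef]
  have hψw : ∀ i, ψ (w i) = ebar i i0 := by
    intro i
    simp only [hwdef, map_mul, hψp, hx, hψq]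
    rw [hmul i i i i0, if_pos rfl, hmul i i0 i0 i0, if_pos rfl]
  have horthw : ∀ i j, i ≠ j → star (w i) * w j = 0 := by
    intro i j hij
    have hsw : star (w i) = q * star (x i) * p i := by
      simp only [hwdef, star_mul, hqs, hps]
      noncomm_ring
    calc star (w i) * w j
        = (q * star (x i)) * (p i * p j) * (x j * q) := by
          rw [hsw]; simp only [hwdef]; noncomm_ring
    _ = 0 := by rw [hporth i j hij, mul_zero, zero_mul]
  have hkerw : ∀ i, ψ (star (w i) * w i) = ψ q := by
    intro i
    rw [map_mul, map_star, hψw i, hstar, hmul i0 i i i0, if_pos rfl, hψq]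
  obtain ⟨q', v, hq's, hq'2, hqq', hq'q, hψq', hψv, hvv, hvy⟩ :=
    hcorrect q hqs hq2 n w hwq horthw hkerw
  have hvqi : ∀ i, star (v i) * v i = q' := by
    intro i
    simpa using hvv i i
  have hvabs : ∀ i, v i * q' = v i := fun i => aux_mul_proj hq's hq'2 (hvqi i)
  have hψvi : ∀ i, ψ (v i) = ebar i i0 := fun i => (hψv i).trans (hψw i)
  refine ⟨fun i j => v i * star (v j), ?_, ?_, ?_, ?_⟩
  · intro i j
    rw [map_mul, map_star, hψvi i, hψvi j, hstar, hmul i i0 i0 j, if_pos rfl]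
  · intro i j
    rw [star_mul, star_star]
  · intro i j k l
    by_cases hjk : j = k
    · subst hjk
      rw [if_pos rfl]
      calc (v i * star (v j)) * (v j * star (v l))
          = v i * (star (v j) * v j) * star (v l) := by noncomm_ring
      _ = (v i * q') * star (v l) := by rw [hvqi j]
      _ = v i * star (v l) := by rw [hvabs i]
    · rw [if_neg hjk]
      have h0 : star (v j) * v k = 0 := by simpa [hjk] using hvv j k
      calc (v i * star (v j)) * (v k * star (v l))
          = v i * (star (v j) * v k) * star (v l) := by noncomm_ring
      _ = 0 := by rw [h0, mul_zero, zero_mul]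
  · show ψ (1 - ∑ i, v i * star (v i)) = 0
    rw [map_sub, map_one, map_sum]
    have hdiag : ∀ i ∈ Finset.univ, ψ (v i * star (v i)) = ebar i i := by
      intro i _
      rw [map_mul, map_star, hψvi i, hstar, hmul i i0 i0 i, if_pos rfl]
    rw [Finset.sum_congr rfl hdiag, hsum, sub_self]
end
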